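/- In B4 with x = σ2σ1²σ2, y = σ3, Δ4 = σ1σ2σ1σ3σ2σ1, the element xyxy = yxyx is central in the subgroup generated by x, y, and σ1; i.e., xyxy commutes with x, with y, and with σ1. -/

import Mathlib

open FreeGroup

/-- The defining relations of the braid group `B₄`. -/
def B4rels : Set (FreeGroup (Fin 3)) :=
  {of 0 * of 1 * of 0 * (of 1 * of 0 * of 1)⁻¹,
   of 1 * of 2 * of 1 * (of 2 * of 1 * of 2)⁻¹,
   of 0 * of 2 * (of 2 * of 0)⁻¹}

/-- The braid group on four strands. -/
abbrev B4 := PresentedGroup B4rels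

def σ₁ : B4 := PresentedGroup.of 0
def σ₂ : B4 := PresentedGroup.of 1
def σ₃ : B4 := PresentedGroup.of 2

/-- `x = σ₂σ₁²σ₂`. -/
def x : B4 := σ₂ * σ₁ ^ 2 * σ₂
/-- `y = σ₃`. -/
def y : B4 := σ₃
/-- The half-twist `Δ₄ = σ₁σ₂σ₁σ₃σ₂σ₁`. -/
def Δ₄ : B4 := σ₁ * σ₂ * σ₁ * σ₃ * σ₂ * σ₁

namespace B4aux

/-- Word map: a list of generator indices to the product in `B4`. -/
def w (l : List (Fin 3)) : B4 := (l.map PresentedGroup.of).prod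

lemma w_append (u v : List (Fin 3)) : w (u ++ v) = w u * w v := by
  simp [w]

lemma relB4 {r : FreeGroup (Fin 3)} (h : r ∈ B4rels) :
    PresentedGroup.mk B4rels r = 1 :=
  (QuotientGroup.eq_one_iff r).2 (Subgroup.subset_normalClosure h)

lemma rel1 : (PresentedGroup.of 0 : B4) * .of 1 * .of 0 = .of 1 * .of 0 * .of 1 := by
  have h := relB4 (r := of 0 * of 1 * of 0 * (of 1 * of 0 * of 1)⁻¹)
    (Set.mem_insert _ _)
  simp only [_root_.map_mul, _root_.map_inv] at h
  exact mul_inv_eq_one.mp h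

lemma rel2 : (PresentedGroup.of 1 : B4) * .of 2 * .of 1 = .of 2 * .of 1 * .of 2 := by
  have h := relB4 (r := of 1 * of 2 * of 1 * (of 2 * of 1 * of 2)⁻¹)
    (Set.mem_insert_of_mem _ (Set.mem_insert _ _))
  simp only [_root_.map_mul, _root_.map_inv] at h
  exact mul_inv_eq_one.mp h

lemma rel3 : (PresentedGroup.of 0 : B4) * .of 2 = .of 2 * .of 0 := by
  have h := relB4 (r := of 0 * of 2 * (of 2 * of 0)⁻¹)
    (Set.mem_insert_of_mem _ (Set.mem_insert_of_mem _ rfl))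
  simp only [_root_.map_mul, _root_.map_inv] at h
  exact mul_inv_eq_one.mp h

lemma step010 : w [0,1,0] = w [1,0,1] := by
  simp only [w, List.map_cons, List.map_nil, List.prod_cons, List.prod_nil, mul_one,
    ← mul_assoc]
  exact rel1

lemma step101 : w [1,0,1] = w [0,1,0] := step010.symm

lemma step121 : w [1,2,1] = w [2,1,2] := by
  simp only [w, List.map_cons, List.map_nil, List.prod_cons, List.prod_nil, mul_one,
    ← mul_assoc]
  exact rel2

lemma step212 : w [2,1,2] = w [1,2,1] := step121.symm

lemma step02 : w [0,2] = w [2,0] := by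
  simp only [w, List.map_cons, List.map_nil, List.prod_cons, List.prod_nil, mul_one,
    ← mul_assoc]
  exact rel3

lemma step20 : w [2,0] = w [0,2] := step02.symm

lemma step_congr {m m' : List (Fin 3)} (h : w m = w m') (u v : List (Fin 3))
    {a b : List (Fin 3)} (ha : u ++ m ++ v = a) (hb : u ++ m' ++ v = b) :
    w a = w b := by
  subst ha hb
  simp only [w_append, h]

lemma key : w [1,0,0,1,2,1,0,0,1,2,0,0] = w [0,1,0,2,1,0,0,1,0,2,1,0] := by
  calc w [1,0,0,1,2,1,0,0,1,2,0,0]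
    _ = w [1,0,0,1,2,1,0,0,1,0,2,0] := step_congr step20 [1,0,0,1,2,1,0,0,1] [0] rfl rfl
    _ = w [1,0,0,2,1,2,0,0,1,0,2,0] := step_congr step121 [1,0,0] [0,0,1,0,2,0] rfl rfl
    _ = w [1,0,2,0,1,2,0,0,1,0,2,0] := step_congr step02 [1,0] [1,2,0,0,1,0,2,0] rfl rfl
    _ = w [1,0,2,0,1,0,2,0,1,0,2,0] := step_congr step20 [1,0,2,0,1] [0,1,0,2,0] rfl rfl
    _ = w [1,0,2,1,0,1,2,0,1,0,2,0] := step_congr step010 [1,0,2] [2,0,1,0,2,0] rfl rfl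
    _ = w [1,0,2,1,0,1,2,1,0,1,2,0] := step_congr step010 [1,0,2,1,0,1,2] [2,0] rfl rfl
    _ = w [1,0,2,1,0,2,1,2,0,1,2,0] := step_congr step121 [1,0,2,1,0] [0,1,2,0] rfl rfl
    _ = w [1,0,2,1,2,0,1,2,0,1,2,0] := step_congr step02 [1,0,2,1] [1,2,0,1,2,0] rfl rfl
    _ = w [1,0,2,1,2,0,1,0,2,1,2,0] := step_congr step20 [1,0,2,1,2,0,1] [1,2,0] rfl rfl
    _ = w [1,0,1,2,1,0,1,0,2,1,2,0] := step_congr step212 [1,0] [0,1,0,2,1,2,0] rfl rfl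
    _ = w [0,1,0,2,1,0,1,0,2,1,2,0] := step_congr step101 [] [2,1,0,1,0,2,1,2,0] rfl rfl
    _ = w [0,1,0,2,1,0,1,0,1,2,1,0] := step_congr step212 [0,1,0,2,1,0,1,0] [0] rfl rfl
    _ = w [0,1,0,2,1,0,0,1,0,2,1,0] := step_congr step101 [0,1,0,2,1,0] [2,1,0] rfl rfl

lemma hd1 : w [0,1,0,2,1,0,0] = w [2,0,1,0,2,1,0] := by
  calc w [0,1,0,2,1,0,0]
    _ = w [0,1,2,0,1,0,0] := step_congr step02 [0,1] [1,0,0] rfl rfl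
    _ = w [0,1,2,1,0,1,0] := step_congr step010 [0,1,2] [0] rfl rfl
    _ = w [0,2,1,2,0,1,0] := step_congr step121 [0] [0,1,0] rfl rfl
    _ = w [2,0,1,2,0,1,0] := step_congr step02 [] [1,2,0,1,0] rfl rfl
    _ = w [2,0,1,0,2,1,0] := step_congr step20 [2,0,1] [1,0] rfl rfl

lemma hd2 : w [0,1,0,2,1,0,1] = w [1,0,1,0,2,1,0] := by
  calc w [0,1,0,2,1,0,1]
    _ = w [1,0,1,2,1,0,1] := step_congr step010 [] [2,1,0,1] rfl rfl
    _ = w [1,0,1,2,0,1,0] := step_congr step101 [1,0,1,2] [] rfl rfl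
    _ = w [1,0,1,0,2,1,0] := step_congr step20 [1,0,1] [1,0] rfl rfl

lemma hd3 : w [0,1,0,2,1,0,2] = w [0,0,1,0,2,1,0] := by
  calc w [0,1,0,2,1,0,2]
    _ = w [0,1,0,2,1,2,0] := step_congr step02 [0,1,0,2,1] [] rfl rfl
    _ = w [0,1,0,1,2,1,0] := step_congr step212 [0,1,0] [0] rfl rfl
    _ = w [0,0,1,0,2,1,0] := step_congr step101 [0] [2,1,0] rfl rfl

lemma hs1x : w [0,0,1,0,0,1] = w [1,0,0,1,0,0] := by
  calc w [0,0,1,0,0,1]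
    _ = w [0,1,0,1,0,1] := step_congr step010 [0] [0,1] rfl rfl
    _ = w [1,0,1,1,0,1] := step_congr step010 [] [1,0,1] rfl rfl
    _ = w [1,0,1,0,1,0] := step_congr step101 [1,0,1] [] rfl rfl
    _ = w [1,0,0,1,0,0] := step_congr step101 [1,0] [0] rfl rfl

lemma hs1y : w [0,0,2] = w [2,0,0] := by
  calc w [0,0,2]
    _ = w [0,2,0] := step_congr step02 [0] [] rfl rfl
    _ = w [2,0,0] := step_congr step02 [] [0] rfl rfl



lemma hx : x = w [1,0,0,1] := by
  simp [x, σ₁, σ₂, w, pow_two, mul_assoc]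

lemma hy : y = w [2] := by
  simp [y, σ₃, w]

lemma hs : σ₁ = w [0] := by
  simp [σ₁, w]

lemma hs2 : σ₂ = w [1] := by
  simp [σ₂, w]

lemma hs3 : σ₃ = w [2] := by
  simp [σ₃, w]

lemma hΔ : Δ₄ = w [0,1,0,2,1,0] := by
  simp [Δ₄, σ₁, σ₂, σ₃, w, mul_assoc]

/-- `x y x y σ₁² = Δ₄²`. -/
lemma main_eq : x * y * x * y * (σ₁ * σ₁) = Δ₄ * Δ₄ := by
  have h := key
  rw [show ([1,0,0,1,2,1,0,0,1,2,0,0] : List (Fin 3))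
      = [1,0,0,1] ++ [2] ++ [1,0,0,1] ++ [2] ++ ([0] ++ [0]) from rfl,
      show ([0,1,0,2,1,0,0,1,0,2,1,0] : List (Fin 3))
      = [0,1,0,2,1,0] ++ [0,1,0,2,1,0] from rfl] at h
  simp only [w_append] at h
  rw [← hx, ← hy, ← hs, ← hΔ, ← mul_assoc] at h
  exact h

lemma dconj1 : Δ₄ * σ₁ = σ₃ * Δ₄ := by
  have h := hd1
  rw [show ([0,1,0,2,1,0,0] : List (Fin 3)) = [0,1,0,2,1,0] ++ [0] from rfl,
      show ([2,0,1,0,2,1,0] : List (Fin 3)) = [2] ++ [0,1,0,2,1,0] from rfl,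
      w_append, w_append, ← hΔ, ← hs, ← hs3] at h
  exact h

lemma dconj2 : Δ₄ * σ₂ = σ₂ * Δ₄ := by
  have h := hd2
  rw [show ([0,1,0,2,1,0,1] : List (Fin 3)) = [0,1,0,2,1,0] ++ [1] from rfl,
      show ([1,0,1,0,2,1,0] : List (Fin 3)) = [1] ++ [0,1,0,2,1,0] from rfl,
      w_append, w_append, ← hΔ, ← hs2] at h
  exact h

lemma dconj3 : Δ₄ * σ₃ = σ₁ * Δ₄ := by
  have h := hd3
  rw [show ([0,1,0,2,1,0,2] : List (Fin 3)) = [0,1,0,2,1,0] ++ [2] from rfl,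
      show ([0,0,1,0,2,1,0] : List (Fin 3)) = [0] ++ [0,1,0,2,1,0] from rfl,
      w_append, w_append, ← hΔ, ← hs, ← hs3] at h
  exact h

/-- `Δ₄²` is central in `B4`. -/
lemma dd_central (g : B4) : Δ₄ * Δ₄ * g = g * (Δ₄ * Δ₄) := by
  have h1 : Δ₄ * Δ₄ * σ₁ = σ₁ * (Δ₄ * Δ₄) := by
    rw [mul_assoc, dconj1, ← mul_assoc, dconj3, mul_assoc]
  have h2 : Δ₄ * Δ₄ * σ₂ = σ₂ * (Δ₄ * Δ₄) := by
    rw [mul_assoc, dconj2, ← mul_assoc, dconj2, mul_assoc]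
  have h3 : Δ₄ * Δ₄ * σ₃ = σ₃ * (Δ₄ * Δ₄) := by
    rw [mul_assoc, dconj3, ← mul_assoc, dconj1, mul_assoc]
  have hg : g ∈ Subgroup.centralizer {Δ₄ * Δ₄} := by
    refine PresentedGroup.generated_by B4rels _ (fun j => ?_) g
    rw [Subgroup.mem_centralizer_iff]
    rintro h rfl
    fin_cases j
    · exact h1
    · exact h2
    · exact h3
  exact Subgroup.mem_centralizer_iff.mp hg (Δ₄ * Δ₄) rfl

/-- `σ₁²` commutes with `x`. -/
lemma s1s1x : σ₁ * σ₁ * x = x * (σ₁ * σ₁) := by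
  have h := hs1x
  rw [show ([0,0,1,0,0,1] : List (Fin 3)) = [0] ++ [0] ++ [1,0,0,1] from rfl,
      show ([1,0,0,1,0,0] : List (Fin 3)) = [1,0,0,1] ++ ([0] ++ [0]) from rfl,
      w_append, w_append, w_append, ← hx, ← hs] at h
  exact h

/-- `σ₁` commutes with `y`. -/
lemma s1y : σ₁ * y = y * σ₁ := rel3

lemma s1s1y : σ₁ * σ₁ * y = y * (σ₁ * σ₁) := by
  rw [mul_assoc, s1y, ← mul_assoc, s1y, mul_assoc]

lemma s1s1s : σ₁ * σ₁ * σ₁ = σ₁ * (σ₁ * σ₁) := mul_assoc _ _ _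

lemma comm_of_aux {g : B4} (hg : σ₁ * σ₁ * g = g * (σ₁ * σ₁)) :
    (x * y * x * y) * g = g * (x * y * x * y) := by
  have e : (x * y * x * y) * g * (σ₁ * σ₁) = x * y * x * y * g * (σ₁ * σ₁) := rfl
  have e2 : (x * y * x * y) * g * (σ₁ * σ₁) = (g * (x * y * x * y)) * (σ₁ * σ₁) := by
    calc (x * y * x * y) * g * (σ₁ * σ₁)
        = (x * y * x * y) * (g * (σ₁ * σ₁)) := mul_assoc _ _ _
      _ = (x * y * x * y) * (σ₁ * σ₁ * g) := by rw [hg]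
      _ = (x * y * x * y) * (σ₁ * σ₁) * g := (mul_assoc _ _ _).symm
      _ = Δ₄ * Δ₄ * g := by rw [main_eq]
      _ = g * (Δ₄ * Δ₄) := dd_central g
      _ = g * (x * y * x * y * (σ₁ * σ₁)) := by rw [main_eq]
      _ = (g * (x * y * x * y)) * (σ₁ * σ₁) := (mul_assoc _ _ _).symm
  exact mul_right_cancel e2

end B4aux

/-- In `B₄`, the element `xyxy = yxyx` is central in the subgroup generated by
`x`, `y` and `σ₁`: it commutes with each of `x`, `y` and `σ₁`. -/
theorem B4_xyxy_central :
    x * y * x * y = y * x * y * x ∧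
    (x * y * x * y) * x = x * (x * y * x * y) ∧
    (x * y * x * y) * y = y * (x * y * x * y) ∧
    (x * y * x * y) * σ₁ = σ₁ * (x * y * x * y) := by
  have hx' := B4aux.comm_of_aux B4aux.s1s1x
  have hy' := B4aux.comm_of_aux B4aux.s1s1y
  have hs' := B4aux.comm_of_aux B4aux.s1s1s
  refine ⟨?_, hx', hy', hs'⟩
  exact mul_right_cancel (b := y) (hy'.trans (by group))
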